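/- Suppose Q_1 is a probability measure on (Ω, F(T)) such that the first row S_1 = (S_{1,j})_j of the exchange-matrix process is a Q_1-martingale with real-valued (possibly zero) entries. Define, for each i, the probability measure Q_i by dQ_i/dQ_1 = S_{i,1}(0)·S_{1,i}(T). Then (Q_i)_{i=1}^d is a numéraire-consistent family of probability measures; moreover each Q_i is absolutely continuous with respect to Q_1, and ∑_i Q_i is equivalent to Q_1. -/

import Mathlib

open MeasureTheory Filter Set Function
open scoped ENNReal

noncomputable section

/-- The product `x * y` of two elements of `[0,∞]` is defined unless `{x, y} = {0, ∞}`. -/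
def DefinedProd (x y : ℝ≥0∞) : Prop := ¬(x = 0 ∧ y = ∞) ∧ ¬(x = ∞ ∧ y = 0)

/-- An exchange matrix: a `d × d` matrix with entries in `[0,∞]` such that `s i i = 1` and
`s i j * s j k = s i k` whenever the product is defined. -/
structure IsExchangeMatrix {d : ℕ} (s : Fin d → Fin d → ℝ≥0∞) : Prop where
  diag : ∀ i, s i i = 1
  consistent : ∀ i j k, DefinedProd (s i j) (s j k) → s i j * s j k = s i k

/-- A value vector for an exchange matrix `s`: `s i j * v j = v i` whenever defined. -/
def IsValueVector {d : ℕ} (s : Fin d → Fin d → ℝ≥0∞) (v : Fin d → ℝ≥0∞) : Prop :=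
  ∀ i j, DefinedProd (s i j) (v j) → s i j * v j = v i

open Classical in
/-- The set of active indices of an exchange matrix: those whose row sum is finite. -/
def activeFinset {d : ℕ} (s : Fin d → Fin d → ℝ≥0∞) : Finset (Fin d) :=
  Finset.univ.filter fun i => ∑ j, s i j < ∞

/-- The market model of the paper: a right-continuous filtration `F` (with `F 0` trivial) on
`[0,T]`, and a right-continuous adapted process `S` of exchange matrices with deterministic
initial value `S0` all of whose rows are finite (no currency has devalued at time `0`). -/
structure MarketModel (d : ℕ) (Ω : Type*) [mΩ : MeasurableSpace Ω] (T : ℝ) where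
  F : Filtration ℝ mΩ
  S : ℝ → Ω → Fin d → Fin d → ℝ≥0∞
  S0 : Fin d → Fin d → ℝ≥0∞
  T_pos : 0 < T
  rc_F : ∀ t ∈ Set.Ico (0 : ℝ) T, (⨅ u ∈ Set.Ioi t, F u) ≤ F t
  trivial_F0 : ∀ A : Set Ω, MeasurableSet[F 0] A → A = ∅ ∨ A = Set.univ
  adapted_S : ∀ t ∈ Set.Icc (0 : ℝ) T, ∀ i j, Measurable[F t] fun ω => S t ω i j
  rc_S : ∀ ω i j, ∀ t ∈ Set.Ico (0 : ℝ) T,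
    Tendsto (fun u => S u ω i j) (nhdsWithin t (Set.Ioi t)) (nhds (S t ω i j))
  exchange_S : ∀ t ∈ Set.Icc (0 : ℝ) T, ∀ ω, IsExchangeMatrix fun i j => S t ω i j
  init_S : ∀ ω, S 0 ω = S0
  active_S0 : ∀ i, ∑ j, S0 i j < ∞

namespace MarketModel

variable {d : ℕ} {Ω : Type*} [mΩ : MeasurableSpace Ω] {T : ℝ}

/-- Basket-quoted price of the `i`-th currency. -/
def Sbar (M : MarketModel d Ω T) (i : Fin d) (t : ℝ) (ω : Ω) : ℝ≥0∞ :=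
  (∑ j, M.S t ω i j)⁻¹

/-- The (random) set of active currencies at time `t`. -/
def active (M : MarketModel d Ω T) (t : ℝ) (ω : Ω) : Finset (Fin d) :=
  activeFinset fun i j => M.S t ω i j

/-- The payoff of a claim `C` in terms of the basket:
`C̄ = (1/|A(T)|) ∑_{j ∈ A(T)} S̄_j(T) C_j`. -/
def Cbar (M : MarketModel d Ω T) (C : Ω → Fin d → ℝ≥0∞) (ω : Ω) : ℝ≥0∞ :=
  ((M.active T ω).card : ℝ≥0∞)⁻¹ * ∑ j ∈ M.active T ω, M.Sbar j T ω * C ω j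

/-- A contingent claim: an `F(T)`-measurable value vector for `S(T)`. -/
def IsClaim (M : MarketModel d Ω T) (C : Ω → Fin d → ℝ≥0∞) : Prop :=
  (∀ i, Measurable fun ω => C ω i) ∧
  ∀ ω, IsValueVector (fun i j => M.S T ω i j) (C ω)

end MarketModel

/-- A real-valued martingale on the time interval `[0, T]`. -/
def MartingaleOn {Ω : Type*} {mΩ : MeasurableSpace Ω} (F : Filtration ℝ mΩ)
    (Q : Measure Ω) (X : ℝ → Ω → ℝ) (T : ℝ) : Prop :=
  (∀ t ∈ Set.Icc (0 : ℝ) T, StronglyMeasurable[F t] (X t) ∧ Integrable (X t) Q) ∧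
  ∀ r ∈ Set.Icc (0 : ℝ) T, ∀ t ∈ Set.Icc (0 : ℝ) T, r ≤ t → Q[X t|F r] =ᵐ[Q] X r

/-- A real-valued supermartingale on the time interval `[0, T]`. -/
def SupermartingaleOn {Ω : Type*} {mΩ : MeasurableSpace Ω} (F : Filtration ℝ mΩ)
    (Q : Measure Ω) (X : ℝ → Ω → ℝ) (T : ℝ) : Prop :=
  (∀ t ∈ Set.Icc (0 : ℝ) T, StronglyMeasurable[F t] (X t) ∧ Integrable (X t) Q) ∧
  ∀ r ∈ Set.Icc (0 : ℝ) T, ∀ t ∈ Set.Icc (0 : ℝ) T, r ≤ t → Q[X t|F r] ≤ᵐ[Q] X r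

/-- A local martingale on `[0, T]`: there is a nondecreasing sequence of stopping times
with `Q(lim_n τ_n > T) = 1` such that each stopped process is a martingale on `[0, T]`. -/
def LocalMartingaleOn {Ω : Type*} {mΩ : MeasurableSpace Ω} (F : Filtration ℝ mΩ)
    (Q : Measure Ω) (X : ℝ → Ω → ℝ) (T : ℝ) : Prop :=
  ∃ τ : ℕ → Ω → ℝ,
    (∀ n, IsStoppingTime F (fun ω => (τ n ω : WithTop ℝ))) ∧
    (∀ n ω, τ n ω ≤ τ (n + 1) ω) ∧
    (∀ᵐ ω ∂Q, ∃ n, T < τ n ω) ∧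
    ∀ n, MartingaleOn F Q (fun t ω => X (min t (τ n ω)) ω) T

/-- A numéraire-consistent family of probability measures:
`E^{Q_i}[S_{i,j}(t) 1_A] = S_{i,j}(0) Q_j(A ∩ {S_{j,i}(t) > 0})`. -/
def NumeraireConsistent {d : ℕ} {Ω : Type*} [mΩ : MeasurableSpace Ω] {T : ℝ}
    (M : MarketModel d Ω T) (Q : Fin d → Measure Ω) : Prop :=
  (∀ i, IsProbabilityMeasure (Q i)) ∧
  ∀ i j : Fin d, ∀ t ∈ Set.Icc (0 : ℝ) T, ∀ A : Set Ω, MeasurableSet[M.F t] A →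
    ∫⁻ ω in A, M.S t ω i j ∂(Q i) = M.S0 i j * Q j (A ∩ {ω | 0 < M.S t ω j i})

/-- A valuation measure with respect to the basket: the basket-quoted prices form a
`Q̄`-martingale on `[0, T]`. -/
def IsValuationMeasure {d : ℕ} {Ω : Type*} [mΩ : MeasurableSpace Ω] {T : ℝ}
    (M : MarketModel d Ω T) (Qb : Measure Ω) : Prop :=
  IsProbabilityMeasure Qb ∧
  ∀ i, MartingaleOn M.F Qb (fun t ω => (M.Sbar i t ω).toReal) T

/-- The aggregation valuation formula
`E^{Q̄}[C̄ | F(r)] = ∑_{j ∈ A(r)} S̄_j(r) E^{Q_j}[C_j / |A(T)| | F(r)]`. -/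
def AggregationFormula {d : ℕ} {Ω : Type*} [mΩ : MeasurableSpace Ω] {T : ℝ}
    (M : MarketModel d Ω T) (Qb : Measure Ω) (Q : Fin d → Measure Ω)
    (C : Ω → Fin d → ℝ≥0∞) (r : ℝ) : Prop :=
  Qb[fun ω => (M.Cbar C ω).toReal|M.F r] =ᵐ[Qb] fun ω =>
    ∑ j, Set.indicator {ω' | ∑ k, M.S r ω' j k < ∞}
      (fun ω' => (M.Sbar j r ω').toReal *
        ((Q j)[fun ω'' => (C ω'' j / ((M.active T ω'').card : ℝ≥0∞)).toReal|M.F r]) ω') ω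

/-- An `[0,∞]`-valued process jumps to zero on `[0, T]`: it is zero at some time `t ∈ [0, T]`
while its left limit at `t` is strictly positive. -/
def JumpsToZeroOn (X : ℝ → ℝ≥0∞) (T : ℝ) : Prop :=
  ∃ t ∈ Set.Icc (0 : ℝ) T, X t = 0 ∧ 0 < Function.leftLim X t

/-- A `[0,∞]`-valued stopping time. -/
def IsStoppingTimeE {Ω : Type*} {mΩ : MeasurableSpace Ω} (F : Filtration ℝ mΩ)
    (τ : Ω → ℝ≥0∞) : Prop :=
  ∀ t : ℝ, 0 ≤ t → MeasurableSet[F t] {ω | τ ω ≤ ENNReal.ofReal t}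

/-- Membership in the σ-algebra `F(τ)` for a `[0,∞]`-valued stopping time `τ`. -/
def MeasurableSetAtE {Ω : Type*} {mΩ : MeasurableSpace Ω} (F : Filtration ℝ mΩ)
    (τ : Ω → ℝ≥0∞) (A : Set Ω) : Prop :=
  MeasurableSet A ∧ ∀ t : ℝ, 0 ≤ t → MeasurableSet[F t] (A ∩ {ω | τ ω ≤ ENNReal.ofReal t})

/-- A predictable time: a stopping time announced by a nondecreasing sequence of stopping
times converging to it and strictly smaller than it on its finiteness set. -/
def IsPredictableTimeE {Ω : Type*} {mΩ : MeasurableSpace Ω} (F : Filtration ℝ mΩ)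
    (σ : Ω → ℝ≥0∞) : Prop :=
  IsStoppingTimeE F σ ∧
  ∃ a : ℕ → Ω → ℝ≥0∞,
    (∀ n, IsStoppingTimeE F (a n)) ∧
    (∀ n ω, a n ω ≤ a (n + 1) ω) ∧
    (∀ ω, (⨆ n, a n ω) = σ ω) ∧
    ∀ n ω, 0 < σ ω → σ ω < ∞ → a n ω < σ ω

/-- No Obvious Devaluations: for every currency `i` and stopping time `τ`,
`P(i ∈ A(T) | F(τ)) > 0` almost surely on `{τ < ∞} ∩ {i ∈ A(τ)}`, formulated via
`F(τ)`-measurable subsets of that event. -/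
def NOD {d : ℕ} {Ω : Type*} [mΩ : MeasurableSpace Ω] {T : ℝ}
    (M : MarketModel d Ω T) (P : Measure Ω) : Prop :=
  ∀ i : Fin d, ∀ τ : Ω → ℝ≥0∞, IsStoppingTimeE M.F τ →
    ∀ A : Set Ω, MeasurableSetAtE M.F τ A →
      (∀ ω ∈ A, τ ω < ∞ ∧ ∑ j, M.S (τ ω).toReal ω i j < ∞) →
      0 < P A → 0 < P (A ∩ {ω | ∑ j, M.S T ω i j < ∞})

/-! The density `S_{i,1}(0) S_{1,i}(T)` is the terminal value of the `Q_1`-martingale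
`S_{1,i}`, normalised to mass one, so on `F(t)` it may be replaced by its value at time `t`.
The numéraire-consistency identity then reduces, pointwise, to the exchange-matrix relation
`S_{1,i} S_{i,j} = S_{1,j} 1_{S_{j,i} > 0}`, and the constants match because
`S_{i,j}(0) S_{j,1}(0) = S_{i,1}(0)`. Since `Q_1` itself is the member of the family with
`i = 1`, the sum of the family dominates `Q_1`. -/

namespace IsExchangeMatrix

variable {d : ℕ} {s : Fin d → Fin d → ℝ≥0∞} {i j k : Fin d}

theorem mul_eq_ite_of_ne_top (hs : IsExchangeMatrix s) (hij : s i j ≠ ∞) :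
    s i j * s j k = if s i j = 0 then 0 else s i k := by
  split_ifs with h0
  · rw [h0, zero_mul]
  · exact hs.consistent i j k ⟨fun h => h0 h.1, fun h => hij h.1⟩

theorem eq_zero_iff_of_ne_zero_of_ne_top (hs : IsExchangeMatrix s) (h0 : s i k ≠ 0)
    (htop : s i k ≠ ∞) : s k j = 0 ↔ s i j = 0 := by
  have hikj : s i k * s k j = s i j := by rw [hs.mul_eq_ite_of_ne_top htop, if_neg h0]
  rw [← hikj, mul_eq_zero, or_iff_right h0]

theorem mul_eq_ite_pos (hs : IsExchangeMatrix s) (hij : s i j ≠ ∞) (hik : s i k ≠ ∞) :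
    s i j * s j k = if 0 < s k j then s i k else 0 := by
  rw [hs.mul_eq_ite_of_ne_top hij]
  by_cases h0 : s i k = 0
  · simp [h0]
  · simp only [pos_iff_ne_zero, ne_eq, hs.eq_zero_iff_of_ne_zero_of_ne_top h0 hik, ite_not]

end IsExchangeMatrix

section Martingale

variable {Ω : Type*} {m m0 : MeasurableSpace Ω} {μ : Measure Ω}

theorem lintegral_mul_eq_of_forall_setLIntegral_eq (hm : m ≤ m0)
    {g h : Ω → ℝ≥0∞} (hg : Measurable g) (hh : Measurable h)
    (hgh : ∀ s, MeasurableSet[m] s → ∫⁻ ω in s, g ω ∂μ = ∫⁻ ω in s, h ω ∂μ)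
    {f : Ω → ℝ≥0∞} (hf : Measurable[m] f) :
    ∫⁻ ω, g ω * f ω ∂μ = ∫⁻ ω, h ω * f ω ∂μ := by
  have htrim : (μ.withDensity g).trim hm = (μ.withDensity h).trim hm := by
    refine @Measure.ext _ m _ _ fun s hs => ?_
    rw [trim_measurableSet_eq hm hs, trim_measurableSet_eq hm hs, withDensity_apply _ (hm s hs),
      withDensity_apply _ (hm s hs), hgh s hs]
  have hfm : Measurable f := hf.mono hm le_rfl
  calc ∫⁻ ω, g ω * f ω ∂μ = ∫⁻ ω, f ω ∂μ.withDensity g :=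
        (lintegral_withDensity_eq_lintegral_mul _ hg hfm).symm
    _ = ∫⁻ ω, f ω ∂μ.withDensity h := by
        rw [← lintegral_trim hm hf, htrim, lintegral_trim hm hf]
    _ = ∫⁻ ω, h ω * f ω ∂μ := lintegral_withDensity_eq_lintegral_mul _ hh hfm

variable {F : Filtration ℝ m0} [IsFiniteMeasure μ] {X : ℝ → Ω → ℝ≥0∞} {t T : ℝ}

theorem MartingaleOn.setLIntegral_eq
    (hX : MartingaleOn F μ (fun t ω => (X t ω).toReal) T)
    (ht : t ∈ Icc 0 T) (hXt : ∀ᵐ ω ∂μ, X t ω ≠ ∞) (hXT : ∀ᵐ ω ∂μ, X T ω ≠ ∞) {s : Set Ω}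
    (hs : MeasurableSet[F t] s) :
    ∫⁻ ω in s, X T ω ∂μ = ∫⁻ ω in s, X t ω ∂μ := by
  have hT : T ∈ Icc 0 T := ⟨ht.1.trans ht.2, le_rfl⟩
  have hofReal : ∀ u ∈ Icc 0 T, (∀ᵐ ω ∂μ, X u ω ≠ ∞) →
      ∫⁻ ω in s, X u ω ∂μ = ENNReal.ofReal (∫ ω in s, (X u ω).toReal ∂μ) := by
    intro u hu hXu
    rw [ofReal_integral_eq_lintegral_ofReal (hX.1 u hu).2.restrict
      (ae_of_all _ fun _ => ENNReal.toReal_nonneg)]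
    exact lintegral_congr_ae
      (ae_restrict_of_ae (hXu.mono fun ω h => (ENNReal.ofReal_toReal h).symm))
  rw [hofReal T hT hXT, hofReal t ht hXt, ← setIntegral_condExp (F.le t) (hX.1 T hT).2 hs]
  exact congrArg ENNReal.ofReal (integral_congr_ae (ae_restrict_of_ae (hX.2 t ht T hT ht.2)))

theorem MartingaleOn.setLIntegral_mul_eq
    (hX : MartingaleOn F μ (fun t ω => (X t ω).toReal) T)
    (ht : t ∈ Icc 0 T) (hXt : ∀ᵐ ω ∂μ, X t ω ≠ ∞) (hXT : ∀ᵐ ω ∂μ, X T ω ≠ ∞)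
    (hXtm : Measurable (X t)) (hXTm : Measurable (X T)) {s : Set Ω} (hs : MeasurableSet[F t] s)
    {f : Ω → ℝ≥0∞} (hf : Measurable[F t] f) :
    ∫⁻ ω in s, X T ω * f ω ∂μ = ∫⁻ ω in s, X t ω * f ω ∂μ := by
  rw [← lintegral_indicator (F.le t s hs), ← lintegral_indicator (F.le t s hs)]
  simp only [indicator_mul_right]
  exact lintegral_mul_eq_of_forall_setLIntegral_eq (F.le t) hXTm hXtm
    (fun s' hs' => hX.setLIntegral_eq ht hXt hXT hs') (hf.indicator hs)

end Martingale

namespace MarketModel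

variable {d : ℕ} {Ω : Type*} [MeasurableSpace Ω] {T : ℝ}

theorem T_mem_Icc (M : MarketModel d Ω T) : T ∈ Icc 0 T := ⟨M.T_pos.le, le_rfl⟩

variable (M : MarketModel d Ω T)

theorem measurable_S {t : ℝ} (ht : t ∈ Icc 0 T) (i j : Fin d) :
    Measurable fun ω => M.S t ω i j :=
  (M.adapted_S t ht i j).mono (M.F.le t) le_rfl

theorem S0_ne_top (i j : Fin d) : M.S0 i j ≠ ∞ :=
  ne_top_of_le_ne_top (M.active_S0 i).ne
    (Finset.single_le_sum (fun _ _ => zero_le) (Finset.mem_univ j))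

theorem isExchangeMatrix_S0 [Nonempty Ω] : IsExchangeMatrix M.S0 := by
  obtain ⟨ω⟩ := ‹Nonempty Ω›
  simpa [M.init_S ω] using M.exchange_S 0 ⟨le_rfl, M.T_pos.le⟩ ω

theorem S0_mul_S0 [Nonempty Ω] (i j k : Fin d) : M.S0 i j * M.S0 j k = M.S0 i k :=
  M.isExchangeMatrix_S0.consistent i j k
    ⟨fun h => M.S0_ne_top j k h.2, fun h => M.S0_ne_top i j h.1⟩

def changeOfNumeraire (Qz : Measure Ω) (z i : Fin d) : Measure Ω :=
  Qz.withDensity fun ω => M.S0 i z * M.S T ω z i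

variable {M}

theorem changeOfNumeraire_self [Nonempty Ω] (Qz : Measure Ω) (z : Fin d) :
    M.changeOfNumeraire Qz z z = Qz := by
  have hone : (fun ω => M.S0 z z * M.S T ω z z) = 1 := by
    funext ω
    rw [(M.exchange_S T M.T_mem_Icc ω).diag z, M.isExchangeMatrix_S0.diag z, mul_one,
      Pi.one_apply]
  rw [changeOfNumeraire, hone, withDensity_one]

variable {Qz : Measure Ω} [IsFiniteMeasure Qz] {z : Fin d} {t : ℝ}

theorem changeOfNumeraire_apply {i : Fin d}
    (hmart : MartingaleOn M.F Qz (fun t ω => (M.S t ω z i).toReal) T)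
    (hfin : ∀ t ∈ Icc 0 T, ∀ᵐ ω ∂Qz, M.S t ω z i ≠ ∞) (ht : t ∈ Icc 0 T) {B : Set Ω}
    (hB : MeasurableSet[M.F t] B) :
    M.changeOfNumeraire Qz z i B = M.S0 i z * ∫⁻ ω in B, M.S t ω z i ∂Qz := by
  rw [changeOfNumeraire, withDensity_apply _ (M.F.le t B hB),
    lintegral_const_mul _ (M.measurable_S M.T_mem_Icc z i),
    hmart.setLIntegral_eq ht (hfin t ht) (hfin T M.T_mem_Icc) hB]

theorem setLIntegral_changeOfNumeraire {i j : Fin d}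
    (hmart : MartingaleOn M.F Qz (fun t ω => (M.S t ω z i).toReal) T)
    (hfin : ∀ t ∈ Icc 0 T, ∀ k, ∀ᵐ ω ∂Qz, M.S t ω z k ≠ ∞) (ht : t ∈ Icc 0 T) {A : Set Ω}
    (hA : MeasurableSet[M.F t] A) :
    ∫⁻ ω in A, M.S t ω i j ∂M.changeOfNumeraire Qz z i
      = M.S0 i z * ∫⁻ ω in A ∩ {ω | 0 < M.S t ω j i}, M.S t ω z j ∂Qz := by
  have hAm : MeasurableSet A := M.F.le t A hA
  have hSj : MeasurableSet {ω | 0 < M.S t ω j i} :=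
    measurableSet_lt measurable_const (M.measurable_S ht j i)
  have hT := M.T_mem_Icc
  rw [changeOfNumeraire, setLIntegral_withDensity_eq_setLIntegral_mul _
      ((M.measurable_S hT z i).const_mul _) (M.measurable_S ht i j) hAm]
  simp only [Pi.mul_apply, mul_assoc]
  rw [lintegral_const_mul' _ _ (M.S0_ne_top i z),
    hmart.setLIntegral_mul_eq ht (hfin t ht i) (hfin T hT i) (M.measurable_S ht z i)
      (M.measurable_S hT z i) hA (M.adapted_S t ht i j),
    inter_comm, ← Measure.restrict_restrict hSj, ← lintegral_indicator hSj]
  refine congrArg _ (lintegral_congr_ae (ae_restrict_of_ae ?_))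
  filter_upwards [hfin t ht i, hfin t ht j] with ω hi hj
  rw [(M.exchange_S t ht ω).mul_eq_ite_pos hi hj]
  simp [indicator_apply]

theorem isProbabilityMeasure_changeOfNumeraire [IsProbabilityMeasure Qz] {i : Fin d}
    (hmart : MartingaleOn M.F Qz (fun t ω => (M.S t ω z i).toReal) T)
    (hfin : ∀ t ∈ Icc 0 T, ∀ᵐ ω ∂Qz, M.S t ω z i ≠ ∞) :
    IsProbabilityMeasure (M.changeOfNumeraire Qz z i) := by
  have : Nonempty Ω := nonempty_of_isProbabilityMeasure Qz
  constructor
  rw [changeOfNumeraire_apply hmart hfin ⟨le_rfl, M.T_pos.le⟩ MeasurableSet.univ]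
  simp [M.init_S, M.S0_mul_S0, M.isExchangeMatrix_S0.diag]

theorem numeraireConsistent_changeOfNumeraire [IsProbabilityMeasure Qz]
    (hmart : ∀ j, MartingaleOn M.F Qz (fun t ω => (M.S t ω z j).toReal) T)
    (hfin : ∀ t ∈ Icc 0 T, ∀ j, ∀ᵐ ω ∂Qz, M.S t ω z j ≠ ∞) :
    NumeraireConsistent M (M.changeOfNumeraire Qz z) := by
  have : Nonempty Ω := nonempty_of_isProbabilityMeasure Qz
  refine ⟨fun i => isProbabilityMeasure_changeOfNumeraire (hmart i) (fun t ht => hfin t ht i),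
    fun i j t ht A hA => ?_⟩
  have hB : MeasurableSet[M.F t] (A ∩ {ω | 0 < M.S t ω j i}) :=
    hA.inter (measurableSet_lt measurable_const (M.adapted_S t ht j i))
  rw [setLIntegral_changeOfNumeraire (hmart i) hfin ht hA,
    changeOfNumeraire_apply (hmart j) (fun t ht => hfin t ht j) ht hB, ← mul_assoc, M.S0_mul_S0]

end MarketModel

/-- classical setup, cases 1 & 2: if the first row `S_1` is a `Q_1`-martingale
(real-valued, possibly hitting zero), then the measures defined by
`dQ_i/dQ_1 = S_{i,1}(0) S_{1,i}(T)` form a numéraire-consistent family; each `Q_i` is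
absolutely continuous with respect to `Q_1`, and `∑ i, Q i` is equivalent to `Q_1`. -/
theorem change_of_numeraire_family {d : ℕ} {Ω : Type*} [MeasurableSpace Ω] {T : ℝ}
    (hd : 0 < d) (M : MarketModel d Ω T) (Q1 : Measure Ω) [IsProbabilityMeasure Q1]
    (hmart : ∀ j, MartingaleOn M.F Q1 (fun t ω => (M.S t ω ⟨0, hd⟩ j).toReal) T)
    (hfin : ∀ t ∈ Set.Icc (0 : ℝ) T, ∀ j, ∀ᵐ ω ∂Q1, M.S t ω ⟨0, hd⟩ j ≠ ∞)
    (Q : Fin d → Measure Ω)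
    (hQdef : ∀ i, Q i = Q1.withDensity fun ω => M.S0 i ⟨0, hd⟩ * M.S T ω ⟨0, hd⟩ i) :
    NumeraireConsistent M Q ∧ (∀ i, Q i ≪ Q1) ∧
      ((∑ i, Q i) ≪ Q1 ∧ Q1 ≪ (∑ i, Q i)) := by
  set z : Fin d := ⟨0, hd⟩
  have : Nonempty Ω := nonempty_of_isProbabilityMeasure Q1
  obtain rfl : Q = M.changeOfNumeraire Q1 z := funext hQdef
  have habs : ∀ i, M.changeOfNumeraire Q1 z i ≪ Q1 :=
    fun _ => withDensity_absolutelyContinuous _ _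
  rw [← Measure.sum_fintype]
  exact ⟨M.numeraireConsistent_changeOfNumeraire hmart hfin, habs,
    Measure.absolutelyContinuous_sum_left habs,
    Measure.absolutelyContinuous_sum_right z
      (M.changeOfNumeraire_self Q1 z).symm.absolutelyContinuous⟩
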